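/- For any mixed permission structure ϱ on N and any nonempty coalition E⊆N, the Harsanyi dividend of the projected unanimity game P_ϱ(u_E) vanishes outside Λ*(E): if F∉Λ*(E) then d^{P_ϱ(u_E)}(F)=0, where Λ*(E) is the set of all unions of minimal autonomous coalitions containing E. Consequently P_ϱ(u_E)=∑_{F∈Λ*(E)} d^{P_ϱ(u_E)}(F)·u_F. -/

import Mathlib

open Finset
open scoped Classical

/-- Harsanyi dividend of coalition `E` in game `v`. -/
noncomputable def dividend {α : Type*} [DecidableEq α] (v : Finset α → ℝ) (E : Finset α) : ℝ :=
  ∑ F ∈ E.powerset, (-1 : ℝ) ^ (E.card - F.card) * v F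

/-- The unanimity game `u_E`. -/
noncomputable def unanim {α : Type*} [DecidableEq α] (E F : Finset α) : ℝ :=
  if E ⊆ F then 1 else 0

/-- The autonomous part of `E` relative to a family `A` of autonomous coalitions:
the union of all members of `A` contained in `E`. -/
def autPartA {α : Type*} [DecidableEq α] (A : Finset (Finset α)) (E : Finset α) : Finset α :=
  (E.powerset.filter (· ∈ A)).sup id

/-- `Λ(E)`: the minimal autonomous coalitions containing `E`. -/
def LamSet {α : Type*} [DecidableEq α] (A : Finset (Finset α)) (E : Finset α) :
    Finset (Finset α) :=
  A.filter (fun F => E ⊆ F ∧ ∀ G ∈ A, E ⊆ G → G ⊆ F → G = F)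

/-- `F ∈ Λ*(E)`: `F` is a union of (finitely many, at least one) members of `Λ(E)`. -/
def LamStar {α : Type*} [DecidableEq α] (A : Finset (Finset α)) (E F : Finset α) : Prop :=
  ∃ T ⊆ LamSet A E, T.Nonempty ∧ F = T.sup id

/-! Autonomous coalitions are closed under union, so `E ⊆ α(G)` iff some `L ∈ Λ(E)` lies in `G`,
i.e. `u_E ∘ α = 1 - ∏_{L ∈ Λ(E)} (1 - u_L)`. Expanding the product and using
`∏_{L ∈ T} u_L = u_{⋃ T}` writes the projected game as a signed sum of the unanimity games
`u_{⋃ T}`, `∅ ≠ T ⊆ Λ(E)`. Dividends are linear and those of `u_F` are Kronecker deltas, so the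
dividends of the projected game live on `Λ*(E)`; the expansion in unanimity games is then
Harsanyi's `v = ∑_F d^v(F) u_F`, i.e. Möbius inversion on the Boolean lattice. -/

namespace Finset

variable {α R : Type*} [DecidableEq α]

theorem sum_Icc_pow_mul_pow [CommSemiring R] {s t : Finset α} (h : s ⊆ t) (a b : R) :
    ∑ u ∈ Icc s t, a ^ (#u - #s) * b ^ (#t - #u) = (a + b) ^ (#t - #s) := by
  have hdisj : ∀ v ∈ (t \ s).powerset, Disjoint s v := fun v hv =>
    disjoint_of_subset_right (mem_powerset.1 hv) disjoint_sdiff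
  rw [Icc_eq_image_powerset h, sum_image, ← card_sdiff_of_subset h, ← sum_pow_mul_eq_add_pow]
  · refine sum_congr rfl fun v hv => ?_
    rw [card_union_of_disjoint (hdisj v hv), card_sdiff_of_subset h]
    congr 2 <;> omega
  · intro v hv w hw hvw
    rw [← union_sdiff_cancel_left (hdisj v hv), ← union_sdiff_cancel_left (hdisj w hw)]
    exact congrArg (· \ s) hvw

theorem zero_pow_card_sub_card [MonoidWithZero R] {s t : Finset α} (h : s ⊆ t) :
    (0 : R) ^ (#t - #s) = if s = t then 1 else 0 := by
  have : #t - #s = 0 ↔ s = t :=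
    ⟨fun h' => eq_of_subset_of_card_le h (by omega), fun h' => by simp [h']⟩
  simp only [zero_pow_eq, this]

theorem sum_Icc_neg_one_pow_card_sub_card_left [CommRing R] {s t : Finset α} (h : s ⊆ t) :
    ∑ u ∈ Icc s t, (-1 : R) ^ (#u - #s) = if s = t then 1 else 0 := by
  simpa [zero_pow_card_sub_card h] using sum_Icc_pow_mul_pow h (-1 : R) 1

theorem sum_Icc_neg_one_pow_card_sub_card_right [CommRing R] {s t : Finset α} (h : s ⊆ t) :
    ∑ u ∈ Icc s t, (-1 : R) ^ (#t - #u) = if s = t then 1 else 0 := by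
  simpa [zero_pow_card_sub_card h] using sum_Icc_pow_mul_pow h (1 : R) (-1)

theorem one_sub_prod_one_sub {ι : Type*} [CommRing R] [DecidableEq ι] (s : Finset ι) (f : ι → R) :
    1 - ∏ i ∈ s, (1 - f i) = ∑ t ∈ s.powerset.erase ∅, (-1) ^ (#t + 1) * ∏ i ∈ t, f i := by
  rw [prod_sub, ← add_sum_erase _ _ (empty_mem_powerset s)]
  simp [pow_succ, sum_neg_distrib]

end Finset

section Dividend

variable {α : Type*} [DecidableEq α]

theorem dividend_unanim (L F : Finset α) : dividend (unanim L) F = if L = F then 1 else 0 := by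
  simp only [dividend, unanim, mul_ite, mul_one, mul_zero]
  rw [← sum_filter]
  by_cases hLF : L ⊆ F
  · rw [← Icc_eq_filter_powerset]
    exact sum_Icc_neg_one_pow_card_sub_card_right hLF
  · rw [filter_eq_empty_iff.2 fun H hH hLH => hLF (hLH.trans (mem_powerset.1 hH)), sum_empty,
      if_neg fun h => hLF h.le]

theorem dividend_sum_mul {ι : Type*} (s : Finset ι) (c : ι → ℝ) (w : ι → Finset α → ℝ)
    (F : Finset α) :
    dividend (fun G => ∑ i ∈ s, c i * w i G) F = ∑ i ∈ s, c i * dividend (w i) F := by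
  simp only [dividend, mul_sum]
  rw [sum_comm]
  exact sum_congr rfl fun i _ => sum_congr rfl fun H _ => by ring

theorem sum_powerset_dividend (v : Finset α → ℝ) (G : Finset α) :
    ∑ F ∈ G.powerset, dividend v F = v G := by
  unfold dividend
  rw [sum_comm' (t' := G.powerset) (s' := fun H => Icc H G)]
  · simp_rw [← sum_mul]
    rw [sum_congr rfl fun H hH => by
      rw [sum_Icc_neg_one_pow_card_sub_card_left (mem_powerset.1 hH), ite_mul, one_mul, zero_mul]]
    simp
  · intro F H
    simp only [mem_powerset, mem_Icc]
    exact ⟨fun h => ⟨⟨h.2, h.1⟩, h.2.trans h.1⟩, fun h => ⟨h.1.2, h.1.1⟩⟩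

theorem sum_dividend_mul_unanim [Fintype α] (v : Finset α → ℝ) (G : Finset α) :
    ∑ F ∈ (univ : Finset α).powerset, dividend v F * unanim F G = v G := by
  simp only [unanim, mul_ite, mul_one, mul_zero]
  rw [← sum_filter, ← sum_powerset_dividend v G]
  congr 1
  ext F
  simp

end Dividend

section Autonomous

variable {α : Type*} [DecidableEq α] {A : Finset (Finset α)}

theorem autPartA_subset (G : Finset α) : autPartA A G ⊆ G :=
  Finset.sup_le fun _ hH => mem_powerset.1 (mem_filter.1 hH).1

theorem subset_autPartA {L G : Finset α} (hL : L ∈ A) (hLG : L ⊆ G) : L ⊆ autPartA A G :=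
  le_sup (f := id) (mem_filter.2 ⟨mem_powerset.2 hLG, hL⟩)

theorem autPartA_mem (hempty : ∅ ∈ A) (hunion : ∀ E ∈ A, ∀ F ∈ A, E ∪ F ∈ A) (G : Finset α) :
    autPartA A G ∈ A :=
  sup_mem (A : Set (Finset α)) hempty hunion _ _ fun _ hH => (mem_filter.1 hH).2

theorem exists_mem_lamSet_subset {E H : Finset α} (hH : H ∈ A) (hEH : E ⊆ H) :
    ∃ L ∈ LamSet A E, L ⊆ H := by
  obtain ⟨L, hLH, hmin⟩ :=
    exists_minimal_le_of_wellFoundedLT (fun G => G ∈ A ∧ E ⊆ G) H ⟨hH, hEH⟩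
  exact ⟨L, mem_filter.2 ⟨hmin.prop.1, hmin.prop.2,
    fun G hG hEG hGL => le_antisymm hGL (hmin.2 ⟨hG, hEG⟩ hGL)⟩, hLH⟩

theorem subset_autPartA_iff (hempty : ∅ ∈ A) (hunion : ∀ E ∈ A, ∀ F ∈ A, E ∪ F ∈ A)
    {E G : Finset α} : E ⊆ autPartA A G ↔ ∃ L ∈ LamSet A E, L ⊆ G := by
  constructor
  · intro h
    obtain ⟨L, hL, hLG⟩ := exists_mem_lamSet_subset (autPartA_mem hempty hunion G) h
    exact ⟨L, hL, hLG.trans (autPartA_subset G)⟩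
  · rintro ⟨L, hL, hLG⟩
    exact (mem_filter.1 hL).2.1.trans (subset_autPartA (mem_filter.1 hL).1 hLG)

theorem unanim_sup (T : Finset (Finset α)) (G : Finset α) :
    unanim (T.sup id) G = ∏ L ∈ T, unanim L G := by
  simp only [unanim, prod_boole]
  exact if_congr Finset.sup_le_iff rfl rfl

theorem unanim_autPartA_eq_sum (hempty : ∅ ∈ A) (hunion : ∀ E ∈ A, ∀ F ∈ A, E ∪ F ∈ A)
    (E G : Finset α) :
    unanim E (autPartA A G) =
      ∑ T ∈ (LamSet A E).powerset.erase ∅, (-1) ^ (#T + 1) * unanim (T.sup id) G := by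
  have h : unanim E (autPartA A G) = 1 - ∏ L ∈ LamSet A E, (1 - unanim L G) := by
    simp only [unanim, subset_autPartA_iff hempty hunion]
    split_ifs with hex
    · obtain ⟨L, hL, hLG⟩ := hex
      rw [prod_eq_zero hL (by simp [hLG]), sub_zero]
    · push Not at hex
      rw [prod_eq_one fun L hL => by simp [hex L hL], sub_self]
  simp_rw [h, one_sub_prod_one_sub, unanim_sup]

theorem dividend_unanim_autPartA (hempty : ∅ ∈ A) (hunion : ∀ E ∈ A, ∀ F ∈ A, E ∪ F ∈ A)
    (E F : Finset α) :
    dividend (fun G => unanim E (autPartA A G)) F =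
      ∑ T ∈ (LamSet A E).powerset.erase ∅, (-1) ^ (#T + 1) * if T.sup id = F then 1 else 0 := by
  simp_rw [unanim_autPartA_eq_sum hempty hunion, dividend_sum_mul, dividend_unanim]

theorem dividend_unanim_autPartA_eq_zero (hempty : ∅ ∈ A)
    (hunion : ∀ E ∈ A, ∀ F ∈ A, E ∪ F ∈ A) {E F : Finset α} (hF : ¬ LamStar A E F) :
    dividend (fun G => unanim E (autPartA A G)) F = 0 := by
  rw [dividend_unanim_autPartA hempty hunion]
  refine sum_eq_zero fun T hT => ?_
  rw [if_neg, mul_zero]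
  rintro rfl
  obtain ⟨hT, hTsub⟩ := mem_erase.1 hT
  exact hF ⟨T, mem_powerset.1 hTsub, nonempty_iff_ne_empty.2 hT, rfl⟩

end Autonomous

theorem stmt17_general {α : Type*} [Fintype α] [DecidableEq α]
    (A : Finset (Finset α)) (hempty : ∅ ∈ A)
    (hunion : ∀ E ∈ A, ∀ F ∈ A, E ∪ F ∈ A)
    (E : Finset α) :
    (∀ F : Finset α, ¬ LamStar A E F →
      dividend (fun G => unanim E (autPartA A G)) F = 0) ∧
    (∀ G : Finset α,
      unanim E (autPartA A G)
        = ∑ F ∈ (univ : Finset α).powerset.filter (LamStar A E),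
            dividend (fun G' => unanim E (autPartA A G')) F * unanim F G) := by
  have hvanish : ∀ F, ¬ LamStar A E F → dividend (fun G => unanim E (autPartA A G)) F = 0 :=
    fun F => dividend_unanim_autPartA_eq_zero hempty hunion
  refine ⟨hvanish, fun G => ?_⟩
  rw [sum_filter_of_ne fun F _ hF => not_imp_comm.1 (hvanish F) (left_ne_zero_of_mul hF),
    sum_dividend_mul_unanim]

theorem stmt17 {α : Type*} [Fintype α] [DecidableEq α]
    (A : Finset (Finset α)) (hempty : ∅ ∈ A) (huniv : univ ∈ A)
    (hunion : ∀ E ∈ A, ∀ F ∈ A, E ∪ F ∈ A)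
    (E : Finset α) (hE : E ≠ ∅) :
    (∀ F : Finset α, ¬ LamStar A E F →
      dividend (fun G => unanim E (autPartA A G)) F = 0) ∧
    (∀ G : Finset α,
      unanim E (autPartA A G)
        = ∑ F ∈ (univ : Finset α).powerset.filter (LamStar A E),
            dividend (fun G' => unanim E (autPartA A G')) F * unanim F G) :=
  stmt17_general A hempty hunion E
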